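/- arXiv:1811.10055 — 2 statements merged into one kernel-verified Lean document; each statement's English description precedes it below -/
import Mathlib

section
/- Barbalat's lemma: if f: [0,∞) → R^n is uniformly continuous and lim_{t→∞} ∫_0^t f(τ) dτ exists and is finite, then lim_{t→∞} f(t) = 0. -/
/-!
Averaging `f` over a window `[t, t + δ]` on which uniform continuity keeps it within `ε` of `f t`
shows `δ ‖f t‖ ≤ ‖∫_t^{t+δ} f‖ + δ ε`. Convergence of `∫_a^t f` makes the window integrals
`∫_t^{t+δ} f` tend to `0`, so eventually `‖f t‖ < 2 ε`.
-/

open Filter Topology MeasureTheory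

variable {E : Type*} [NormedAddCommGroup E] [NormedSpace ℝ E]

theorem tendsto_intervalIntegral_add_const_zero {f : ℝ → E} {a : ℝ} {I : E}
    (hf : ∀ᶠ t in atTop, IntervalIntegrable f volume a t)
    (hF : Tendsto (fun t => ∫ τ in a..t, f τ) atTop (𝓝 I)) (d : ℝ) :
    Tendsto (fun t => ∫ τ in t..t + d, f τ) atTop (𝓝 0) := by
  have hshift : Tendsto (· + d) atTop atTop := tendsto_atTop_add_const_right atTop d tendsto_id
  have hdiff : Tendsto (fun t => (∫ τ in a..t + d, f τ) - ∫ τ in a..t, f τ) atTop (𝓝 0) := by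
    simpa using (hF.comp hshift).sub hF
  have hfd : ∀ᶠ t in atTop, IntervalIntegrable f volume a (t + d) := hshift.eventually hf
  refine hdiff.congr' ?_
  filter_upwards [hf, hfd] with t ht htd
  exact intervalIntegral.integral_interval_sub_left htd ht

theorem mul_norm_le_norm_intervalIntegral_add [CompleteSpace E] {f : ℝ → E} {t d ε : ℝ}
    (hd : 0 ≤ d) (hf : IntervalIntegrable f volume t (t + d))
    (hosc : ∀ τ ∈ Set.Icc t (t + d), ‖f τ - f t‖ ≤ ε) :
    d * ‖f t‖ ≤ ‖∫ τ in t..t + d, f τ‖ + d * ε := by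
  have hmean : d • f t - ∫ τ in t..t + d, f τ = ∫ τ in t..t + d, (f t - f τ) := by
    rw [intervalIntegral.integral_sub intervalIntegrable_const hf,
      intervalIntegral.integral_const, add_sub_cancel_left]
  have hdev : ‖∫ τ in t..t + d, (f t - f τ)‖ ≤ ε * d := by
    have := intervalIntegral.norm_integral_le_of_norm_le_const (a := t) (b := t + d) (C := ε)
      (f := fun τ => f t - f τ) fun τ hτ => by
        rw [Set.uIoc_of_le (by linarith)] at hτ
        rw [norm_sub_rev]
        exact hosc τ (Set.Ioc_subset_Icc_self hτ)
    rwa [add_sub_cancel_left, abs_of_nonneg hd] at this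
  calc d * ‖f t‖ = ‖d • f t‖ := by rw [norm_smul, Real.norm_of_nonneg hd]
    _ ≤ ‖∫ τ in t..t + d, f τ‖ + ‖d • f t - ∫ τ in t..t + d, f τ‖ := norm_le_insert' _ _
    _ ≤ ‖∫ τ in t..t + d, f τ‖ + d * ε := by rw [hmean]; linarith

theorem tendsto_zero_of_uniformContinuousOn_of_tendsto_integral [CompleteSpace E]
    {f : ℝ → E} {a : ℝ} {I : E} (hUC : UniformContinuousOn f (Set.Ici a))
    (hF : Tendsto (fun t => ∫ τ in a..t, f τ) atTop (𝓝 I)) :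
    Tendsto f atTop (𝓝 0) := by
  have hint : ∀ b c, a ≤ b → b ≤ c → IntervalIntegrable f volume b c := fun b c hab hbc =>
    (hUC.continuousOn.mono (Set.Icc_subset_Ici_iff hbc |>.2 hab)).intervalIntegrable_of_Icc hbc
  rw [NormedAddGroup.tendsto_nhds_zero]
  intro ε hε
  obtain ⟨δ, hδ, hosc⟩ := Metric.uniformContinuousOn_iff_le.1 hUC (ε / 2) (half_pos hε)
  have hwindow := tendsto_intervalIntegral_add_const_zero
    ((eventually_ge_atTop a).mono fun t ht => hint a t le_rfl ht) hF δ
  filter_upwards [NormedAddGroup.tendsto_nhds_zero.1 hwindow (δ * (ε / 2)) (by positivity),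
    eventually_ge_atTop a] with t hsmall ht
  have hbound := mul_norm_le_norm_intervalIntegral_add (f := f) hδ.le
    (hint t (t + δ) ht (by linarith)) fun τ hτ => by
      rw [← dist_eq_norm]
      refine hosc τ (ht.trans hτ.1) t ht ?_
      rw [Real.dist_eq, abs_of_nonneg (by linarith [hτ.1])]
      linarith [hτ.2]
  refine lt_of_mul_lt_mul_left (a := δ) ?_ hδ.le
  linarith

/-- Barbalat's lemma: if `f : [0,∞) → ℝⁿ` is uniformly continuous and
`∫₀ᵗ f(τ) dτ` has a finite limit as `t → ∞`, then `f(t) → 0`. -/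
theorem barbalat (n : ℕ) (f : ℝ → EuclideanSpace ℝ (Fin n))
    (hUC : UniformContinuousOn f (Set.Ici 0))
    (hlim : ∃ I : EuclideanSpace ℝ (Fin n),
      Tendsto (fun t => ∫ τ in (0 : ℝ)..t, f τ) atTop (nhds I)) :
    Tendsto f atTop (nhds 0) :=
  let ⟨_, hI⟩ := hlim
  tendsto_zero_of_uniformContinuousOn_of_tendsto_integral hUC hI
end

section
/- Let V̇(t) = -α s^T H_1 s - β ||s||_1 - s^T Γ Q sgn(s) - s^T C q̇ - s^T g + 2λ s^T M q̇, where H_1 is symmetric positive definite, ||g|| <= k_g, ||C_i|| <= k_{c_i}, ||M_i|| <= k_{m_i}, Γ = blkdiag(γ_i I), Q = blkdiag(||q̇_i|| I). If β > k_g and γ_i > k_{c_i} + 2λ k_{m_i} for every i, then V̇ <= -α s^T H_1 s <= -α λ_min(H_1) ||s||^2 for all s, q̇. -/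
/-!
Every cross term of `V̇` is bounded block by block through Cauchy–Schwarz, the operator-norm
bounds and `‖sᵢ‖ ≤ ‖sᵢ‖₁`: the disturbance term by `k_g ‖sᵢ‖₁`, the Coriolis and inertia terms
by `(k_{cᵢ} + 2λ k_{mᵢ}) ‖q̇ᵢ‖ ‖sᵢ‖₁`. The gain conditions let the switching terms
`β ‖s‖₁` and `sᵀ Γ Q sgn s` absorb them. The second inequality is the Rayleigh bound
`λ_min ‖x‖² ≤ xᵀ H₁ x`, read off in an orthonormal eigenbasis of `H₁`.
-/

open Matrix

section

variable {ι : Type*} [Fintype ι]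

theorem EuclideanSpace.norm_le_sum_abs (x : EuclideanSpace ℝ ι) : ‖x‖ ≤ ∑ i, |x i| := by
  rw [EuclideanSpace.norm_eq, Real.sqrt_le_iff]
  refine ⟨by positivity, ?_⟩
  simp only [Real.norm_eq_abs]
  exact Finset.sum_sq_le_sq_sum_of_nonneg fun i _ => abs_nonneg _

theorem Matrix.abs_dotProduct_mulVec_le [DecidableEq ι] (A : Matrix ι ι ℝ)
    (x y : EuclideanSpace ℝ ι) :
    |x ⬝ᵥ A *ᵥ y| ≤ ‖toEuclideanCLM (𝕜 := ℝ) A‖ * ‖x‖ * ‖y‖ := by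
  have hAy : A *ᵥ y = toEuclideanCLM (𝕜 := ℝ) A y := rfl
  rw [hAy, dotProduct_comm]
  calc _ ≤ ‖x‖ * ‖toEuclideanCLM (𝕜 := ℝ) A y‖ := abs_real_inner_le_norm _ _
    _ ≤ ‖x‖ * (‖toEuclideanCLM (𝕜 := ℝ) A‖ * ‖y‖) := by
        gcongr; exact ContinuousLinearMap.le_opNorm _ _
    _ = _ := by ring

theorem Matrix.IsHermitian.iInf_eigenvalues_mul_norm_sq_le [DecidableEq ι] {A : Matrix ι ι ℝ}
    (hA : A.IsHermitian) (x : EuclideanSpace ℝ ι) :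
    (⨅ i, hA.eigenvalues i) * ‖x‖ ^ 2 ≤ x ⬝ᵥ A *ᵥ x := by
  set b := hA.eigenvectorBasis
  have hT : (toEuclideanLin A).IsSymmetric := isSymmetric_toEuclideanLin_iff.mpr hA
  have hb : ∀ j, toEuclideanLin A (b j) = hA.eigenvalues j • b j := fun j => by
    rw [toLpLin_apply, hA.mulVec_eigenvectorBasis]; rfl
  have hquad : x ⬝ᵥ A *ᵥ x = ∑ j, hA.eigenvalues j * inner ℝ (b j) x ^ 2 := by
    rw [dotProduct_comm]
    change inner ℝ x (toEuclideanLin A x) = _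
    rw [← b.sum_inner_mul_inner x (toEuclideanLin A x)]
    refine Finset.sum_congr rfl fun j _ => ?_
    rw [← hT, hb, real_inner_smul_left, real_inner_comm]
    ring
  rw [hquad, ← b.sum_sq_inner_right x, Finset.mul_sum]
  gcongr
  exact ciInf_le (Finite.bddBelow_range _) _

theorem norm_le_sqrt_sum_norm_sq {E : Type*} [SeminormedAddCommGroup E] (f : ι → E) (i : ι) :
    ‖f i‖ ≤ √(∑ j, ‖f j‖ ^ 2) :=
  Real.le_sqrt_of_sq_le <|
    Finset.single_le_sum (f := fun j => ‖f j‖ ^ 2) (fun _ _ => sq_nonneg _) (Finset.mem_univ i)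

theorem EuclideanSpace.norm_sq_toLp_uncurry {κ : Type*} [Fintype κ] (s : ι → EuclideanSpace ℝ κ) :
    ‖(WithLp.toLp 2 fun p : ι × κ => s p.1 p.2 : EuclideanSpace ℝ (ι × κ))‖ ^ 2 =
      ∑ i, ‖s i‖ ^ 2 := by
  simp only [EuclideanSpace.norm_sq_eq, Fintype.sum_prod_type]

theorem EuclideanSpace.neg_dotProduct_le_mul_sum_abs {s g : EuclideanSpace ℝ ι} {β : ℝ}
    (hg : ‖g‖ ≤ β) : -(s ⬝ᵥ g) ≤ β * ∑ p, |s p| := by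
  rw [dotProduct_comm]
  calc -(inner ℝ s g) ≤ ‖s‖ * ‖g‖ := (neg_le_abs _).trans (abs_real_inner_le_norm s g)
    _ ≤ (∑ p, |s p|) * β := by gcongr; exact norm_le_sum_abs s
    _ = β * ∑ p, |s p| := mul_comm _ _

theorem Matrix.mul_dotProduct_mulVec_sub_dotProduct_mulVec_le [DecidableEq ι]
    {M C : Matrix ι ι ℝ} {s v : EuclideanSpace ℝ ι} {lam km kc γ : ℝ} (hlam : 0 ≤ lam)
    (hM : ‖toEuclideanCLM (𝕜 := ℝ) M‖ ≤ km) (hC : ‖toEuclideanCLM (𝕜 := ℝ) C‖ ≤ kc)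
    (hγ : kc + 2 * lam * km ≤ γ) :
    2 * lam * (s ⬝ᵥ M *ᵥ v) - s ⬝ᵥ C *ᵥ v ≤ γ * ‖v‖ * ∑ p, |s p| := by
  have hMsv : s ⬝ᵥ M *ᵥ v ≤ km * ‖s‖ * ‖v‖ :=
    (le_abs_self _).trans ((abs_dotProduct_mulVec_le M s v).trans (by gcongr))
  have hCsv : -(s ⬝ᵥ C *ᵥ v) ≤ kc * ‖s‖ * ‖v‖ :=
    (neg_le_abs _).trans ((abs_dotProduct_mulVec_le C s v).trans (by gcongr))
  have hkm : 0 ≤ km := (norm_nonneg _).trans hM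
  have hγ0 : 0 ≤ γ := by linarith [(norm_nonneg _).trans hC, mul_nonneg hlam hkm]
  calc 2 * lam * (s ⬝ᵥ M *ᵥ v) - s ⬝ᵥ C *ᵥ v ≤ (kc + 2 * lam * km) * ‖s‖ * ‖v‖ := by
        linarith [mul_le_mul_of_nonneg_left hMsv hlam]
    _ ≤ γ * ‖v‖ * ∑ p, |s p| := by
        rw [mul_right_comm]; gcongr; exact EuclideanSpace.norm_le_sum_abs s

end

theorem vdot_negative_definite_bound_general (n : ℕ)
    (s dq g : Fin n → EuclideanSpace ℝ (Fin 3))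
    (Mi Ci : Fin n → Matrix (Fin 3) (Fin 3) ℝ)
    (H1 : Matrix (Fin n × Fin 3) (Fin n × Fin 3) ℝ)
    (hH1h : H1.IsHermitian)
    (α lam β kg : ℝ) (γ km kc : Fin n → ℝ)
    (hα : 0 ≤ α) (hlam : 0 ≤ lam)
    (hg : Real.sqrt (∑ i, ‖g i‖ ^ 2) ≤ kg)
    (hMi : ∀ i, ‖Matrix.toEuclideanCLM (𝕜 := ℝ) (Mi i)‖ ≤ km i)
    (hCi : ∀ i, ‖Matrix.toEuclideanCLM (𝕜 := ℝ) (Ci i)‖ ≤ kc i)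
    (hβgain : kg < β) (hγgain : ∀ i, kc i + 2 * lam * km i < γ i)
    (Vdot : ℝ)
    (hVdot : Vdot =
      -α * ((fun p : Fin n × Fin 3 => s p.1 p.2) ⬝ᵥ
              H1.mulVec (fun p : Fin n × Fin 3 => s p.1 p.2))
        - β * (∑ i, ∑ p, |s i p|)
        - (∑ i, γ i * ‖dq i‖ * (∑ p, |s i p|))
        - (∑ i, s i ⬝ᵥ (Ci i).mulVec (dq i))
        - (∑ i, s i ⬝ᵥ g i)
        + 2 * lam * (∑ i, s i ⬝ᵥ (Mi i).mulVec (dq i))) :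
    Vdot ≤ -α * ((fun p : Fin n × Fin 3 => s p.1 p.2) ⬝ᵥ
              H1.mulVec (fun p : Fin n × Fin 3 => s p.1 p.2)) ∧
      -α * ((fun p : Fin n × Fin 3 => s p.1 p.2) ⬝ᵥ
              H1.mulVec (fun p : Fin n × Fin 3 => s p.1 p.2)) ≤
        -α * (⨅ p, hH1h.eigenvalues p) * (∑ i, ‖s i‖ ^ 2) := by
  have hdisturbance : -(∑ i, s i ⬝ᵥ g i) ≤ β * ∑ i, ∑ p, |s i p| := by
    rw [Finset.mul_sum, ← Finset.sum_neg_distrib]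
    exact Finset.sum_le_sum fun i _ => EuclideanSpace.neg_dotProduct_le_mul_sum_abs
      ((norm_le_sqrt_sum_norm_sq g i).trans (hg.trans hβgain.le))
  have hcoupling : 2 * lam * (∑ i, s i ⬝ᵥ (Mi i).mulVec (dq i)) - ∑ i, s i ⬝ᵥ (Ci i).mulVec (dq i)
      ≤ ∑ i, γ i * ‖dq i‖ * ∑ p, |s i p| := by
    rw [Finset.mul_sum, ← Finset.sum_sub_distrib]
    exact Finset.sum_le_sum fun i _ => mul_dotProduct_mulVec_sub_dotProduct_mulVec_le hlam
      (hMi i) (hCi i) (hγgain i).le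
  refine ⟨by linarith, ?_⟩
  have hrayleigh := hH1h.iInf_eigenvalues_mul_norm_sq_le (WithLp.toLp 2 fun p => s p.1 p.2)
  rw [EuclideanSpace.norm_sq_toLp_uncurry] at hrayleigh
  linarith [mul_le_mul_of_nonneg_left hrayleigh hα]

/-- Gain conditions `β > k_g`, `γᵢ > k_{cᵢ} + 2λ k_{mᵢ}` ensure
`V̇ ≤ -α sᵀ H₁ s ≤ -α λ_min(H₁) ‖s‖²`. -/
theorem vdot_negative_definite_bound (n : ℕ) (hn : 0 < n)
    (s dq g : Fin n → EuclideanSpace ℝ (Fin 3))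
    (Mi Ci : Fin n → Matrix (Fin 3) (Fin 3) ℝ)
    (H1 : Matrix (Fin n × Fin 3) (Fin n × Fin 3) ℝ)
    (hH1h : H1.IsHermitian) (hH1pd : H1.PosDef)
    (α lam β kg : ℝ) (γ km kc : Fin n → ℝ)
    (hα : 0 ≤ α) (hlam : 0 ≤ lam) (hβ : 0 ≤ β) (hγ : ∀ i, 0 ≤ γ i)
    (hg : Real.sqrt (∑ i, ‖g i‖ ^ 2) ≤ kg)
    (hMi : ∀ i, ‖Matrix.toEuclideanCLM (𝕜 := ℝ) (Mi i)‖ ≤ km i)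
    (hCi : ∀ i, ‖Matrix.toEuclideanCLM (𝕜 := ℝ) (Ci i)‖ ≤ kc i)
    (hβgain : kg < β) (hγgain : ∀ i, kc i + 2 * lam * km i < γ i)
    (Vdot : ℝ)
    (hVdot : Vdot =
      -α * ((fun p : Fin n × Fin 3 => s p.1 p.2) ⬝ᵥ
              H1.mulVec (fun p : Fin n × Fin 3 => s p.1 p.2))
        - β * (∑ i, ∑ p, |s i p|)
        - (∑ i, γ i * ‖dq i‖ * (∑ p, |s i p|))
        - (∑ i, s i ⬝ᵥ (Ci i).mulVec (dq i))
        - (∑ i, s i ⬝ᵥ g i)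
        + 2 * lam * (∑ i, s i ⬝ᵥ (Mi i).mulVec (dq i))) :
    Vdot ≤ -α * ((fun p : Fin n × Fin 3 => s p.1 p.2) ⬝ᵥ
              H1.mulVec (fun p : Fin n × Fin 3 => s p.1 p.2)) ∧
      -α * ((fun p : Fin n × Fin 3 => s p.1 p.2) ⬝ᵥ
              H1.mulVec (fun p : Fin n × Fin 3 => s p.1 p.2)) ≤
        -α * (⨅ p, hH1h.eigenvalues p) * (∑ i, ‖s i‖ ^ 2) :=
  vdot_negative_definite_bound_general n s dq g Mi Ci H1 hH1h α lam β kg γ km kc hα hlam hg hMi hCi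
    hβgain hγgain Vdot hVdot
end
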